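/- There is a constant C > 0 such that for every measurable f : ℝ → ℝ with M² := ∫_ℝ sech²(y)·|f(y)|² dy < ∞ and every x ≥ 0, one has |e^{−√2·x}·∫_{−∞}^{x} e^{√2·y}·sech²(y)·f(y) dy| ≤ C·M·e^{−x}. -/

import Mathlib

open MeasureTheory

noncomputable def sech (x : ℝ) : ℝ := 1 / Real.cosh x

lemma sech_pos (x : ℝ) : 0 < sech x := by
  unfold sech; positivity

lemma sech_le (x : ℝ) : sech x ≤ 2 * Real.exp (-x) := by
  have h : Real.exp x / 2 ≤ Real.cosh x := by
    rw [Real.cosh_eq]; nlinarith [Real.exp_pos (-x)]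
  have h2 := one_div_le_one_div_of_le (by positivity) h
  calc sech x = 1 / Real.cosh x := rfl
    _ ≤ 1 / (Real.exp x / 2) := h2
    _ = 2 * Real.exp (-x) := by
        rw [Real.exp_neg]
        field_simp

lemma integrableOn_exp_mul_Iic' {c : ℝ} (hc : 0 < c) (x : ℝ) :
    IntegrableOn (fun y => Real.exp (c * y)) (Set.Iic x) := by
  have A : MeasurableEmbedding fun x : ℝ => -x :=
    (Homeomorph.neg ℝ).isClosedEmbedding.measurableEmbedding
  have hmap : (volume : Measure ℝ).restrict (Set.Iic x)
      = Measure.map (fun t : ℝ => -t) ((volume : Measure ℝ).restrict (Set.Ici (-x))) := by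
    rw [← Measure.map_neg_eq_self (volume : Measure ℝ)]
    rw [Measure.restrict_map measurable_neg measurableSet_Iic]
    congr 1
    ext t
    simp
  rw [IntegrableOn, hmap, A.integrable_map_iff]
  have : IntegrableOn (fun t : ℝ => Real.exp (-c * t)) (Set.Ici (-x)) := by
    rw [integrableOn_Ici_iff_integrableOn_Ioi]
    exact exp_neg_integrableOn_Ioi _ hc
  refine this.congr_fun (fun t _ => ?_) measurableSet_Ici
  simp only [Function.comp_apply]
  congr 1
  ring

lemma integral_exp_mul_Iic' {c : ℝ} (hc : 0 < c) (x : ℝ) :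
    ∫ y in Set.Iic x, Real.exp (c * y) = Real.exp (c * x) / c := by
  have hderiv : ∀ y ∈ Set.Iic x, HasDerivAt (fun t => Real.exp (c * t) / c) (Real.exp (c * y)) y := by
    intro y _
    have h1 : HasDerivAt (fun t : ℝ => c * t) c y := by
      simpa using (hasDerivAt_id y).const_mul c
    have h2 := (Real.hasDerivAt_exp (c * y)).comp y h1
    have h3 := h2.div_const c
    simpa [mul_comm, mul_div_assoc, mul_div_cancel_left₀ _ hc.ne'] using h3
  have htend : Filter.Tendsto (fun t => Real.exp (c * t) / c) Filter.atBot (nhds 0) := by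
    have h1 : Filter.Tendsto (fun t : ℝ => c * t) Filter.atBot Filter.atBot :=
      Filter.tendsto_id.const_mul_atBot hc
    have h2 := Real.tendsto_exp_atBot.comp h1
    simpa using h2.div_const c
  have := integral_Iic_of_hasDerivAt_of_tendsto' hderiv (integrableOn_exp_mul_Iic' hc x) htend
  simpa using this

/-- There is `C > 0` such that for every measurable `f` with
`M² = ∫ sech²y·|f y|² dy < ∞` and every `x ≥ 0`,
`|e^{−√2 x} ∫_{−∞}^x e^{√2 y} sech²y f(y) dy| ≤ C·M·e^{−x}`. -/
theorem stmt_12 :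
    ∃ C : ℝ, 0 < C ∧ ∀ f : ℝ → ℝ, Measurable f →
      Integrable (fun y => sech y ^ 2 * |f y| ^ 2) (volume : Measure ℝ) →
      ∀ x : ℝ, 0 ≤ x →
        |Real.exp (-(Real.sqrt 2) * x) *
            ∫ y in Set.Iic x, Real.exp (Real.sqrt 2 * y) * sech y ^ 2 * f y|
          ≤ C * Real.sqrt (∫ y : ℝ, sech y ^ 2 * |f y| ^ 2) * Real.exp (-x) := by
  set s : ℝ := Real.sqrt 2 with hs
  have hs1 : 1 < s := by
    rw [hs, show (1:ℝ) = Real.sqrt 1 from (Real.sqrt_one).symm]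
    exact Real.sqrt_lt_sqrt (by norm_num) (by norm_num)
  set c : ℝ := 2 * s - 2 with hc
  have hcpos : 0 < c := by rw [hc]; linarith
  refine ⟨Real.sqrt (4 / c), Real.sqrt_pos.2 (by positivity), ?_⟩
  intro f hf hf2 x hx
  set M2 : ℝ := ∫ y : ℝ, sech y ^ 2 * |f y| ^ 2 with hM2
  have hM2nn : 0 ≤ M2 := integral_nonneg fun y => by positivity
  set μ := (volume : Measure ℝ).restrict (Set.Iic x) with hμ
  set a : ℝ → ℝ := fun y => Real.exp (s * y) * sech y with ha
  set b : ℝ → ℝ := fun y => sech y * |f y| with hb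
  have hrpow2 : ∀ t : ℝ, t ^ (2:ℝ) = t ^ 2 := fun t => by
    rw [show (2:ℝ) = ((2:ℕ):ℝ) by norm_num, Real.rpow_natCast]
  -- Hölder / Cauchy-Schwarz
  have hpq : Real.HolderConjugate 2 2 := Real.HolderConjugate.two_two
  have hsechCont : Continuous sech := by
    unfold sech
    exact continuous_const.div Real.continuous_cosh fun y => (Real.cosh_pos y).ne'
  have haCont : Continuous a := ((Real.continuous_exp.comp (continuous_const.mul continuous_id)).mul hsechCont)
  have hbound : ∀ y, a y ^ 2 ≤ 4 * Real.exp (c * y) := by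
    intro y
    have h1 : sech y ≤ 2 * Real.exp (-y) := sech_le y
    have h2 : (0:ℝ) ≤ sech y := (sech_pos y).le
    have heq : a y ^ 2 = Real.exp (s * y) ^ 2 * sech y ^ 2 := by rw [ha]; ring
    rw [heq]
    have h3 : sech y ^ 2 ≤ (2 * Real.exp (-y)) ^ 2 := by nlinarith
    have h4 : Real.exp (s * y) ^ 2 * sech y ^ 2 ≤ Real.exp (s * y) ^ 2 * (2 * Real.exp (-y)) ^ 2 :=
      mul_le_mul_of_nonneg_left h3 (by positivity)
    refine h4.trans_eq ?_
    have hexp : Real.exp (c * y)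
        = Real.exp (s * y) * Real.exp (s * y) * (Real.exp (-y) * Real.exp (-y)) := by
      rw [← Real.exp_add, ← Real.exp_add, ← Real.exp_add]
      congr 1
      rw [hc]; ring
    rw [hexp]; ring
  have hasq_int : Integrable (fun y => a y ^ 2) μ := by
    refine Integrable.mono' ((integrableOn_exp_mul_Iic' hcpos x).const_mul 4) ?_ ?_
    · exact (haCont.pow 2).aestronglyMeasurable
    · refine Filter.Eventually.of_forall fun y => ?_
      rw [Real.norm_eq_abs, abs_of_nonneg (by positivity)]
      exact hbound y
  have hbsq_int : Integrable (fun y => b y ^ 2) (volume : Measure ℝ) := by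
    refine hf2.congr (Filter.Eventually.of_forall fun y => ?_)
    rw [hb]; ring
  have hbmeas : Measurable b := (hsechCont.measurable).mul hf.abs
  have hMa : MemLp a (ENNReal.ofReal 2) μ := by
    rw [show ENNReal.ofReal 2 = 2 by norm_num]
    exact (memLp_two_iff_integrable_sq haCont.aestronglyMeasurable).2 hasq_int
  have hMb : MemLp b (ENNReal.ofReal 2) μ := by
    rw [show ENNReal.ofReal 2 = 2 by norm_num]
    exact (memLp_two_iff_integrable_sq hbmeas.aestronglyMeasurable).2
      (hbsq_int.restrict)
  have hCS := integral_mul_le_Lp_mul_Lq_of_nonneg hpq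
    (Filter.Eventually.of_forall fun y =>
      mul_nonneg (Real.exp_pos _).le (sech_pos y).le)
    (Filter.Eventually.of_forall fun y =>
      mul_nonneg (sech_pos y).le (abs_nonneg _)) hMa hMb
  -- bound ∫ a^2
  have hIa : ∫ y, a y ^ 2 ∂μ ≤ 4 / c * Real.exp (c * x) := by
    calc ∫ y, a y ^ 2 ∂μ ≤ ∫ y, 4 * Real.exp (c * y) ∂μ := by
          refine integral_mono_ae hasq_int ((integrableOn_exp_mul_Iic' hcpos x).const_mul 4)
            (Filter.Eventually.of_forall fun y => hbound y)
      _ = 4 * ∫ y in Set.Iic x, Real.exp (c * y) := by rw [hμ, integral_const_mul]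
      _ = 4 * (Real.exp (c * x) / c) := by rw [integral_exp_mul_Iic' hcpos x]
      _ = 4 / c * Real.exp (c * x) := by ring
  -- bound ∫ b^2
  have hIb : ∫ y, b y ^ 2 ∂μ ≤ M2 := by
    have : ∫ y, b y ^ 2 ∂μ ≤ ∫ y, b y ^ 2 := by
      rw [hμ]
      exact setIntegral_le_integral hbsq_int (Filter.Eventually.of_forall fun y => by positivity)
    refine this.trans_eq ?_
    rw [hM2]
    exact integral_congr_ae (Filter.Eventually.of_forall fun y => by rw [hb]; ring)
  have hIann : 0 ≤ ∫ y, a y ^ 2 ∂μ := integral_nonneg fun y => by positivity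
  have hIbnn : 0 ≤ ∫ y, b y ^ 2 ∂μ := integral_nonneg fun y => by positivity
  -- main estimate
  have hmain : |∫ y in Set.Iic x, Real.exp (s * y) * sech y ^ 2 * f y|
      ≤ Real.sqrt (4 / c * Real.exp (c * x)) * Real.sqrt M2 := by
    have h0 : |∫ y in Set.Iic x, Real.exp (s * y) * sech y ^ 2 * f y|
        ≤ ∫ y, a y * b y ∂μ := by
      calc |∫ y in Set.Iic x, Real.exp (s * y) * sech y ^ 2 * f y|
          ≤ ∫ y in Set.Iic x, |Real.exp (s * y) * sech y ^ 2 * f y| := by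
            simpa only [Real.norm_eq_abs] using
              norm_integral_le_integral_norm (μ := μ)
                (fun y => Real.exp (s * y) * sech y ^ 2 * f y)
        _ = ∫ y, a y * b y ∂μ := by
            refine integral_congr_ae (Filter.Eventually.of_forall fun y => ?_)
            show |Real.exp (s * y) * sech y ^ 2 * f y| = a y * b y
            rw [abs_mul, abs_mul, abs_of_nonneg (Real.exp_pos _).le,
              abs_of_nonneg (by positivity : (0:ℝ) ≤ sech y ^ 2), ha, hb]
            ring
    refine h0.trans (hCS.trans ?_)
    have hmono := Real.rpow_le_rpow hIann (hIa.trans (le_refl _)) (by norm_num : (0:ℝ) ≤ 1/2)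
    have hmono2 := Real.rpow_le_rpow hIbnn hIb (by norm_num : (0:ℝ) ≤ 1/2)
    have e1 : (∫ y, a y ^ (2:ℝ) ∂μ) = ∫ y, a y ^ 2 ∂μ :=
      integral_congr_ae (Filter.Eventually.of_forall fun y => hrpow2 _)
    have e2 : (∫ y, b y ^ (2:ℝ) ∂μ) = ∫ y, b y ^ 2 ∂μ :=
      integral_congr_ae (Filter.Eventually.of_forall fun y => hrpow2 _)
    rw [e1, e2]
    have s1 : (∫ y, a y ^ 2 ∂μ) ^ (1/2 : ℝ) ≤ Real.sqrt (4 / c * Real.exp (c * x)) := by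
      rw [Real.sqrt_eq_rpow]
      exact Real.rpow_le_rpow hIann hIa (by norm_num)
    have s2 : (∫ y, b y ^ 2 ∂μ) ^ (1/2 : ℝ) ≤ Real.sqrt M2 := by
      rw [Real.sqrt_eq_rpow]
      exact Real.rpow_le_rpow hIbnn hIb (by norm_num)
    have nn1 : (0:ℝ) ≤ (∫ y, a y ^ 2 ∂μ) ^ (1/2 : ℝ) := Real.rpow_nonneg hIann _
    have nn2 : (0:ℝ) ≤ (∫ y, b y ^ 2 ∂μ) ^ (1/2 : ℝ) := Real.rpow_nonneg hIbnn _
    exact mul_le_mul s1 s2 nn2 (Real.sqrt_nonneg _)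
  -- conclude
  rw [abs_mul, abs_of_nonneg (Real.exp_pos _).le]
  have hsqsplit : Real.sqrt (4 / c * Real.exp (c * x))
      = Real.sqrt (4 / c) * Real.exp (c * x / 2) := by
    rw [Real.sqrt_mul (by positivity)]
    congr 1
    rw [show Real.exp (c * x) = Real.exp (c * x / 2) ^ 2 by
      rw [sq, ← Real.exp_add]; congr 1; ring]
    exact Real.sqrt_sq (Real.exp_pos _).le
  calc Real.exp (-s * x) * |∫ y in Set.Iic x, Real.exp (s * y) * sech y ^ 2 * f y|
      ≤ Real.exp (-s * x) * (Real.sqrt (4 / c) * Real.exp (c * x / 2) * Real.sqrt M2) := by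
        refine mul_le_mul_of_nonneg_left ?_ (Real.exp_pos _).le
        rw [← hsqsplit]; exact hmain
    _ = Real.sqrt (4 / c) * Real.sqrt M2 * (Real.exp (-s * x) * Real.exp (c * x / 2)) := by ring
    _ = Real.sqrt (4 / c) * Real.sqrt M2 * Real.exp (-x) := by
        rw [← Real.exp_add]
        congr 1
        rw [hc]; ring
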